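/- Cancellation property: for all words u, v, w and all k ≥ 1, v ∼_k w if and only if u·v ∼_k u·w, and also v ∼_k w if and only if v·u ∼_k w·u. -/

import Mathlib

/-- Number of occurrences of the second word as a (scattered) subword of the first. -/
def binom {α : Type*} [DecidableEq α] : List α → List α → ℕ
  | _, [] => 1
  | [], _ :: _ => 0
  | a :: u, b :: v => binom u (b :: v) + if a = b then binom u v else 0

/-- k-binomial equivalence. -/
def BinEq {α : Type*} [DecidableEq α] (k : ℕ) (u v : List α) : Prop :=
  ∀ x : List α, x.length ≤ k → binom u x = binom v x

/-! Every occurrence of `x` in `u ++ v` splits `x` as `x.take i ++ x.drop i`, an occurrence of the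
prefix in `u` followed by one of the suffix in `v`. In this convolution formula for
`binom (u ++ v) x` the term in which `u` receives the empty prefix is `binom v x`, and all other
terms involve only strictly shorter subwords of `x`; so `BinEq` cancels a common prefix (and
symmetrically a common suffix) by induction on the length bound. -/

section Binom

variable {α : Type*} [DecidableEq α]

@[simp]
lemma binom_nil_right (u : List α) : binom u [] = 1 := by
  cases u <;> rfl

@[simp]
lemma binom_nil_cons (b : α) (x : List α) : binom [] (b :: x) = 0 := rfl

lemma binom_cons_cons (a b : α) (u x : List α) :
    binom (a :: u) (b :: x) = binom u (b :: x) + if a = b then binom u x else 0 := rfl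

lemma binom_append (u v x : List α) :
    binom (u ++ v) x =
      ∑ i ∈ Finset.range (x.length + 1), binom u (x.take i) * binom v (x.drop i) := by
  induction u generalizing x with
  | nil =>
    cases x with
    | nil => simp
    | cons b x => simp [Finset.sum_range_succ']
  | cons a u ih =>
    cases x with
    | nil => simp
    | cons b x =>
      rw [List.cons_append, binom_cons_cons, ih, ih, List.length_cons,
        Finset.sum_range_succ' _ (x.length + 1),
        Finset.sum_range_succ' _ (x.length + 1)]
      by_cases hab : a = b
      · simp only [List.take_succ_cons, List.drop_succ_cons, List.take_zero, binom_nil_right,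
          List.drop_zero, one_mul, hab, ↓reduceIte, binom_cons_cons, add_mul, Finset.sum_add_distrib]
        ring
      · simp [hab, binom_cons_cons]

lemma binom_append_eq_add_sum_left (u v x : List α) :
    binom (u ++ v) x = binom v x +
      ∑ i ∈ Finset.range x.length, binom u (x.take (i + 1)) * binom v (x.drop (i + 1)) := by
  rw [binom_append, Finset.sum_range_succ', add_comm]
  simp

lemma binom_append_eq_add_sum_right (u v x : List α) :
    binom (v ++ u) x = binom v x +
      ∑ i ∈ Finset.range x.length, binom v (x.take i) * binom u (x.drop i) := by
  rw [binom_append, Finset.sum_range_succ, add_comm]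
  simp

end Binom

namespace BinEq

variable {α : Type*} [DecidableEq α] {k : ℕ} {u v w : List α}

lemma zero (v w : List α) : BinEq 0 v w := by
  intro x hx
  simp [List.eq_nil_of_length_eq_zero (Nat.le_zero.1 hx)]

lemma append_left (h : BinEq k v w) (u : List α) : BinEq k (u ++ v) (u ++ w) := by
  intro x hx
  simp only [binom_append]
  refine Finset.sum_congr rfl fun i _ => ?_
  rw [h _ (le_trans (by simp) hx)]

lemma append_right (h : BinEq k v w) (u : List α) : BinEq k (v ++ u) (w ++ u) := by
  intro x hx
  simp only [binom_append]
  refine Finset.sum_congr rfl fun i _ => ?_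
  rw [h _ (le_trans (by simp) hx)]

lemma of_append_left (h : BinEq k (u ++ v) (u ++ w)) : BinEq k v w := by
  suffices ∀ j ≤ k, BinEq j v w from this k le_rfl
  intro j
  induction j with
  | zero => exact fun _ => zero v w
  | succ j ih =>
    intro hj x hx
    have hsplit := h x (hx.trans hj)
    rw [binom_append_eq_add_sum_left, binom_append_eq_add_sum_left,
      Finset.sum_congr rfl fun i _ => ?_] at hsplit
    · exact Nat.add_right_cancel hsplit
    · rw [ih (Nat.le_of_succ_le hj) (x.drop (i + 1)) (by simp; omega)]

lemma of_append_right (h : BinEq k (v ++ u) (w ++ u)) : BinEq k v w := by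
  suffices ∀ j ≤ k, BinEq j v w from this k le_rfl
  intro j
  induction j with
  | zero => exact fun _ => zero v w
  | succ j ih =>
    intro hj x hx
    have hsplit := h x (hx.trans hj)
    rw [binom_append_eq_add_sum_right, binom_append_eq_add_sum_right,
      Finset.sum_congr rfl fun i hi => ?_] at hsplit
    · exact Nat.add_right_cancel hsplit
    · rw [ih (Nat.le_of_succ_le hj) (x.take i) (by simp at hi ⊢; omega)]

end BinEq

theorem binEq_cancel_general {α : Type*} [DecidableEq α] (k : ℕ) (u v w : List α) :
    (BinEq k v w ↔ BinEq k (u ++ v) (u ++ w)) ∧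
    (BinEq k v w ↔ BinEq k (v ++ u) (w ++ u)) :=
  ⟨⟨fun h => h.append_left u, BinEq.of_append_left⟩,
    ⟨fun h => h.append_right u, BinEq.of_append_right⟩⟩

theorem binEq_cancel {α : Type*} [DecidableEq α] (k : ℕ) (hk : 1 ≤ k) (u v w : List α) :
    (BinEq k v w ↔ BinEq k (u ++ v) (u ++ w)) ∧
    (BinEq k v w ↔ BinEq k (v ++ u) (w ++ u)) :=
  binEq_cancel_general k u v w
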